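/- arXiv:math/0508378 — 5 statements merged into one kernel-verified Lean document; each statement's English description precedes it below -/
import Mathlib

section
/- If f : ℂ → ℂ is (k-1)-times differentiable, then applying the differential operator Δ(d/dL) = ∏_{1≤i<j≤k} (∂/∂L_j − ∂/∂L_i) to the product ∏_{i=1}^k f(L_i) yields the determinant det_{k×k}( f^{(j-1)}(L_i) ). -/
open Finset

/-- Partial derivative in the `i`-th coordinate of a function of `k` complex variables. -/
noncomputable def pderivCoord {k : ℕ} (i : Fin k) (g : (Fin k → ℂ) → ℂ) :
    (Fin k → ℂ) → ℂ :=
  fun x => deriv (fun t => g (Function.update x i t)) (x i)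

/-- Apply the operator `∏ i (∂/∂L_i)^(m i)` to `g`. -/
noncomputable def applyPows {k : ℕ} (m : Fin k → ℕ) (g : (Fin k → ℂ) → ℂ) :
    (Fin k → ℂ) → ℂ :=
  (List.finRange k).foldr (fun i F => (pderivCoord i)^[m i] ∘ F) id g

/-- The Vandermonde differential operator
`Δ(d/dL) = det ((∂/∂L_i)^(j-1)) = ∏_{i<j} (∂/∂L_j - ∂/∂L_i)`. -/
noncomputable def vandermondeOp {k : ℕ} (g : (Fin k → ℂ) → ℂ) : (Fin k → ℂ) → ℂ :=
  fun x => ∑ σ : Equiv.Perm (Fin k),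
    (Equiv.Perm.sign σ : ℤ) • applyPows (fun i => (σ i : ℕ)) g x

noncomputable def prodFn {k : ℕ} (H : Fin k → ℂ → ℂ) : (Fin k → ℂ) → ℂ :=
  fun x => ∏ j, H j (x j)

lemma pderiv_prodFn {k : ℕ} (H : Fin k → ℂ → ℂ) (i : Fin k)
    (hd : Differentiable ℂ (H i)) :
    pderivCoord i (prodFn H) = prodFn (Function.update H i (deriv (H i))) := by
  funext x
  have key : (fun t => prodFn H (Function.update x i t))
      = fun t => H i t * ∏ j ∈ univ.erase i, H j (x j) := by
    funext t
    rw [prodFn]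
    rw [← Finset.mul_prod_erase univ _ (mem_univ i)]
    simp only [Function.update_self]
    congr 1
    refine Finset.prod_congr rfl fun j hj => ?_
    rw [Function.update_of_ne (Finset.ne_of_mem_erase hj)]
  rw [pderivCoord]
  rw [key, deriv_mul_const (hd _)]
  rw [prodFn]
  rw [← Finset.mul_prod_erase univ _ (mem_univ i)]
  simp only [Function.update_self]
  congr 1
  refine Finset.prod_congr rfl fun j hj => ?_
  rw [Function.update_of_ne (Finset.ne_of_mem_erase hj)]

lemma iterate_pderiv_prodFn {k n : ℕ} (H : Fin k → ℂ → ℂ) (i : Fin k) (m : ℕ)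
    (hm : m ≤ n) (hd : ContDiff ℂ (n : ℕ∞) (H i)) :
    (pderivCoord i)^[m] (prodFn H)
      = prodFn (Function.update H i (iteratedDeriv m (H i))) := by
  induction m with
  | zero => simp [iteratedDeriv_zero, Function.update_eq_self]
  | succ m ih =>
    rw [Function.iterate_succ_apply', ih (le_of_lt (Nat.lt_of_succ_le hm)),
      pderiv_prodFn _ i ?_]
    · rw [Function.update_idem, Function.update_self, ← iteratedDeriv_succ]
    · rw [Function.update_self]
      exact hd.differentiable_iteratedDeriv m
        (by exact_mod_cast Nat.lt_of_succ_le hm)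

lemma foldr_pderiv_prodFn {k n : ℕ} (m : Fin k → ℕ) (hm : ∀ i, m i ≤ n)
    (H : Fin k → ℂ → ℂ) (hd : ∀ i, ContDiff ℂ (n : ℕ∞) (H i)) :
    ∀ l : List (Fin k), l.Nodup →
      l.foldr (fun i F => (pderivCoord i)^[m i] ∘ F) id (prodFn H)
        = prodFn (fun j => if j ∈ l then iteratedDeriv (m j) (H j) else H j) := by
  intro l
  induction l with
  | nil => intro _; simp [prodFn]
  | cons i t ih =>
    intro hnd
    have hit : i ∉ t := (List.nodup_cons.mp hnd).1
    have hHt := ih (List.nodup_cons.mp hnd).2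
    set H' : Fin k → ℂ → ℂ :=
      fun j => if j ∈ t then iteratedDeriv (m j) (H j) else H j with hH'
    have hH'i : H' i = H i := by simp [hH', hit]
    have : (i :: t).foldr (fun i F => (pderivCoord i)^[m i] ∘ F) id (prodFn H)
        = (pderivCoord i)^[m i] (prodFn H') := by
      simp only [List.foldr_cons, Function.comp_apply]
      rw [hHt]
    rw [this, iterate_pderiv_prodFn H' i (m i) (hm i) (by rw [hH'i]; exact hd i)]
    have heq : Function.update H' i (iteratedDeriv (m i) (H' i))
        = fun j => if j ∈ i :: t then iteratedDeriv (m j) (H j) else H j := by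
      funext j
      by_cases hji : j = i
      · subst hji
        simp [Function.update_self, hH'i]
      · rw [Function.update_of_ne hji]
        by_cases hjt : j ∈ t <;> simp [hH', hjt, hji]
    rw [heq]
theorem stmt_4 (k : ℕ) (hk : 1 ≤ k) (f : ℂ → ℂ) (hf : ContDiff ℂ ((k - 1 : ℕ)) f)
    (L : Fin k → ℂ) :
    vandermondeOp (fun x => ∏ i, f (x i)) L
      = Matrix.det (Matrix.of fun i j : Fin k => iteratedDeriv (j : ℕ) f (L i)) := by
  have hg : (fun x : Fin k → ℂ => ∏ i, f (x i)) = prodFn (fun _ => f) := rfl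
  rw [← Matrix.det_transpose, Matrix.det_apply, vandermondeOp]
  refine Finset.sum_congr rfl fun σ _ => ?_
  have happ : applyPows (fun i => (σ i : ℕ)) (fun x => ∏ i, f (x i)) L
      = ∏ i, iteratedDeriv (σ i : ℕ) f (L i) := by
    rw [hg, applyPows, foldr_pderiv_prodFn (n := k - 1) (fun i => (σ i : ℕ))
      (fun i => Nat.le_sub_one_of_lt (σ i).isLt)
      (fun _ => f) (fun _ => hf) _ (List.nodup_finRange k)]
    simp [prodFn, List.mem_finRange]
  rw [happ]
  simp [Matrix.transpose_apply, Units.smul_def]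
end

section
/- If f : ℂ → ℂ is (2k-2)-times differentiable, then applying the squared Vandermonde differential operator Δ(d/dL)^2 to ∏_{i=1}^k f(L_i) and then setting all L_i = L yields k! · det_{k×k}( f^{(i+j-2)}(L) ). -/
/-!
Both applications of `Δ(d/dL)` act on finite linear combinations of products `∏ i g i (L_i)`,
and on such a combination each `∂/∂L_i` simply differentiates the `i`-th factor. Hence
`Δ(d/dL)^2 ∏ f(L_i)` is `∑_{τ,σ} sgn τ sgn σ ∏_i f^{(τ i + σ i)}(L_i)`. At `L_i = L` the inner
sum over `σ` is the determinant of the Hankel matrix `(f^{(i+j)}(L))` with rows permuted by `τ`,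
i.e. `sgn τ` times that determinant, so each of the `k!` outer terms contributes the determinant.
-/

open Finset

namespace Matrix

variable {n R : Type*} [DecidableEq n] [Fintype n] [CommRing R]

theorem sum_perm_sign_mul_prod_apply (M : Matrix n n R) (τ : Equiv.Perm n) :
    ∑ σ : Equiv.Perm n, ((Equiv.Perm.sign σ : ℤ) : R) * ∏ i, M (τ i) (σ i)
      = Equiv.Perm.sign τ * M.det := by
  rw [← det_permute, ← det_transpose, det_apply']
  rfl

theorem sum_perm_sum_perm_sign_mul_sign_mul_prod (M : Matrix n n R) :
    ∑ τ : Equiv.Perm n, ∑ σ : Equiv.Perm n,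
        ((Equiv.Perm.sign τ : ℤ) : R) * Equiv.Perm.sign σ * ∏ i, M (τ i) (σ i)
      = (Fintype.card n).factorial * M.det := by
  have sign_mul_self (τ : Equiv.Perm n) :
      ((Equiv.Perm.sign τ : ℤ) : R) * Equiv.Perm.sign τ = 1 := by
    rw [← Int.cast_mul, ← Units.val_mul, Int.units_mul_self, Units.val_one, Int.cast_one]
  calc ∑ τ : Equiv.Perm n, ∑ σ : Equiv.Perm n,
        ((Equiv.Perm.sign τ : ℤ) : R) * Equiv.Perm.sign σ * ∏ i, M (τ i) (σ i)
      = ∑ τ : Equiv.Perm n, ((Equiv.Perm.sign τ : ℤ) : R) * (Equiv.Perm.sign τ * M.det) := by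
        simp only [mul_assoc, ← mul_sum, sum_perm_sign_mul_prod_apply]
    _ = (Fintype.card n).factorial * M.det := by
        simp only [← mul_assoc, sign_mul_self, one_mul, sum_const, card_univ, Fintype.card_perm,
          nsmul_eq_mul]

end Matrix

noncomputable def sumProd {k : ℕ} {α : Type*} [Fintype α] (c : α → ℂ)
    (g : α → Fin k → ℂ → ℂ) : (Fin k → ℂ) → ℂ :=
  fun x => ∑ a, c a * ∏ i, g a i (x i)

section sumProd

variable {k : ℕ} {α : Type*} [Fintype α] (c : α → ℂ)

theorem prod_apply_update (g : Fin k → ℂ → ℂ) (x : Fin k → ℂ) (i : Fin k) (t : ℂ) :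
    ∏ j, g j (Function.update x i t j) = g i t * ∏ j ∈ univ.erase i, g j (x j) := by
  rw [← mul_prod_erase univ _ (mem_univ i), Function.update_self]
  congr 1
  exact prod_congr rfl fun j hj => by rw [Function.update_of_ne (ne_of_mem_erase hj)]

theorem prod_update_apply (g : Fin k → ℂ → ℂ) (x : Fin k → ℂ) (i : Fin k) (h : ℂ → ℂ) :
    ∏ j, Function.update g i h j (x j) = h (x i) * ∏ j ∈ univ.erase i, g j (x j) := by
  rw [← mul_prod_erase univ _ (mem_univ i), Function.update_self]
  congr 1
  exact prod_congr rfl fun j hj => by rw [Function.update_of_ne (ne_of_mem_erase hj)]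

theorem hasDerivAt_sumProd_update (g : α → Fin k → ℂ → ℂ) (i : Fin k)
    (hg : ∀ a, Differentiable ℂ (g a i)) (x : Fin k → ℂ) :
    HasDerivAt (fun t => sumProd c g (Function.update x i t))
      (sumProd c (fun a => Function.update (g a) i (deriv (g a i))) x) (x i) := by
  simp only [sumProd, prod_apply_update, prod_update_apply]
  exact HasDerivAt.fun_sum fun a _ => ((hg a (x i)).hasDerivAt.mul_const _).const_mul (c a)

theorem pderivCoord_sumProd (g : α → Fin k → ℂ → ℂ) (i : Fin k)
    (hg : ∀ a, Differentiable ℂ (g a i)) :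
    pderivCoord i (sumProd c g)
      = sumProd c (fun a => Function.update (g a) i (deriv (g a i))) :=
  funext fun x => (hasDerivAt_sumProd_update c g i hg x).deriv

theorem iterate_pderivCoord_sumProd (g : α → Fin k → ℂ → ℂ) (i : Fin k) (m : ℕ)
    (hg : ∀ a, ∀ j < m, Differentiable ℂ (deriv^[j] (g a i))) :
    (pderivCoord i)^[m] (sumProd c g)
      = sumProd c (fun a => Function.update (g a) i (deriv^[m] (g a i))) := by
  induction m with
  | zero => simp
  | succ m ih =>
    rw [Function.iterate_succ_apply', ih fun a j hj => hg a j (hj.trans m.lt_succ_self),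
      pderivCoord_sumProd c _ i fun a => by simpa using hg a m m.lt_succ_self]
    simp only [Function.update_self, Function.update_idem, ← Function.iterate_succ_apply' deriv]

theorem foldr_pderivCoord_sumProd (g : α → Fin k → ℂ → ℂ) (m : Fin k → ℕ)
    (hg : ∀ a i, ∀ j < m i, Differentiable ℂ (deriv^[j] (g a i)))
    (l : List (Fin k)) (hl : l.Nodup) :
    l.foldr (fun i F => (pderivCoord i)^[m i] ∘ F) id (sumProd c g)
      = sumProd c (fun a i => deriv^[if i ∈ l then m i else 0] (g a i)) := by
  induction l with
  | nil => simp
  | cons i l ih =>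
    obtain ⟨hi, hl⟩ := List.nodup_cons.mp hl
    rw [List.foldr_cons, Function.comp_apply, ih hl,
      iterate_pderivCoord_sumProd c _ i _ fun a j hj => by simpa [hi] using hg a i j hj]
    congr 1
    funext a j
    by_cases hji : j = i
    · subst hji
      simp [hi]
    · simp [hji]

theorem applyPows_sumProd (g : α → Fin k → ℂ → ℂ) (m : Fin k → ℕ)
    (hg : ∀ a i, ∀ j < m i, Differentiable ℂ (deriv^[j] (g a i))) :
    applyPows m (sumProd c g) = sumProd c (fun a i => deriv^[m i] (g a i)) := by
  rw [applyPows, foldr_pderivCoord_sumProd c g m hg _ (List.nodup_finRange k)]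
  simp

theorem vandermondeOp_sumProd (g : α → Fin k → ℂ → ℂ)
    (hg : ∀ a i, ∀ j < k - 1, Differentiable ℂ (deriv^[j] (g a i))) :
    vandermondeOp (sumProd c g)
      = sumProd (fun p : Equiv.Perm (Fin k) × α => ((Equiv.Perm.sign p.1 : ℤ) : ℂ) * c p.2)
          (fun p i => deriv^[p.1 i] (g p.2 i)) := by
  funext x
  have hσ (σ : Equiv.Perm (Fin k)) := applyPows_sumProd c g (fun i => σ i)
    fun a i j hj => hg a i j (by have := (σ i).isLt; omega)
  simp only [vandermondeOp, hσ, sumProd, Fintype.sum_prod_type, zsmul_eq_mul, mul_sum, mul_assoc]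

end sumProd

theorem stmt_5_general (k : ℕ) (f : ℂ → ℂ) (hf : ContDiff ℂ ((2 * k - 2 : ℕ)) f)
    (L : ℂ) :
    vandermondeOp (vandermondeOp (fun x => ∏ i, f (x i))) (fun _ : Fin k => L)
      = (Nat.factorial k : ℂ) *
          Matrix.det (Matrix.of fun i j : Fin k => iteratedDeriv ((i : ℕ) + (j : ℕ)) f L) := by
  have hdiff (n : ℕ) (hn : n < 2 * k - 2) : Differentiable ℂ (deriv^[n] f) := by
    rw [← iteratedDeriv_eq_iterate]
    exact hf.differentiable_iteratedDeriv n (by exact_mod_cast hn)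
  have hprod : (fun x : Fin k → ℂ => ∏ i, f (x i))
      = sumProd (fun _ : Unit => 1) (fun _ _ => f) := by
    funext x
    simp [sumProd]
  have hdet := Matrix.sum_perm_sum_perm_sign_mul_sign_mul_prod
    (Matrix.of fun i j : Fin k => iteratedDeriv ((i : ℕ) + (j : ℕ)) f L)
  rw [Fintype.card_fin] at hdet
  rw [hprod, vandermondeOp_sumProd _ _ fun _ _ j hj => hdiff j (by omega),
    vandermondeOp_sumProd _ _ fun p i j hj => by
      rw [← Function.iterate_add_apply]
      exact hdiff _ (by have := (p.1 i).isLt; omega),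
    ← hdet]
  simp [sumProd, Fintype.sum_prod_type, iteratedDeriv_eq_iterate, Function.iterate_add_apply,
    mul_assoc]

theorem stmt_5 (k : ℕ) (hk : 1 ≤ k) (f : ℂ → ℂ) (hf : ContDiff ℂ ((2 * k - 2 : ℕ)) f)
    (L : ℂ) :
    vandermondeOp (vandermondeOp (fun x => ∏ i, f (x i))) (fun _ : Fin k => L)
      = (Nat.factorial k : ℂ) *
          Matrix.det (Matrix.of fun i j : Fin k => iteratedDeriv ((i : ℕ) + (j : ℕ)) f L) :=
  stmt_5_general k f hf L
end

section
/- For L > 0 and complex numbers α_1,...,α_{2k} with |α_j| < c, one has (1/(2πi)) ∮_{|w|=c} e^{wL} / (w ∏_{j=1}^{2k}(w − α_j)) dw = ∫_{x_j ≥ 0, Σ_{j=1}^{2k} x_j ≤ L} e^{Σ_{j=1}^{2k} x_j α_j} dx. -/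
open Complex Real MeasureTheory Metric

lemma integral_cexp_mul (a : ℂ) (ha : a ≠ 0) (L : ℝ) :
    ∫ t in (0:ℝ)..L, Complex.exp (t * a) = (Complex.exp (L * a) - 1) / a := by
  have h : ∀ t : ℝ, HasDerivAt (fun s : ℝ => Complex.exp (s * a) / a) (Complex.exp (t * a)) t := by
    intro t
    have h1 : HasDerivAt (fun s : ℝ => (s : ℂ) * a) a t := by
      simpa using (HasDerivAt.ofReal_comp (hasDerivAt_id t)).mul_const a
    have h2 := (h1.cexp).div_const a
    simpa [mul_div_cancel_right₀ _ ha] using h2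
  have := intervalIntegral.integral_eq_sub_of_hasDerivAt (fun t _ => h t)
    ((Complex.continuous_ofReal.mul continuous_const).cexp.intervalIntegrable 0 L)
  simp only [this, Complex.ofReal_zero, zero_mul, Complex.exp_zero]
  ring

lemma kernel (a w : ℂ) (hw : w ≠ a) (L : ℝ) :
    (∫ t in (0:ℝ)..L, Complex.exp (t * a) * Complex.exp ((L - t : ℝ) * w))
      = (Complex.exp (L * w) - Complex.exp (L * a)) / (w - a) := by
  have h1 : ∀ t : ℝ, Complex.exp (t * a) * Complex.exp ((L - t : ℝ) * w)
      = Complex.exp (L * w) * Complex.exp (t * (a - w)) := by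
    intro t
    rw [← Complex.exp_add, ← Complex.exp_add]
    congr 1
    push_cast
    ring
  have haw : a - w ≠ 0 := sub_ne_zero.2 (Ne.symm hw)
  have haw' : w - a ≠ 0 := sub_ne_zero.2 hw
  simp_rw [h1]
  rw [intervalIntegral.integral_const_mul, integral_cexp_mul _ haw]
  have hE : Complex.exp ((L : ℂ) * (a - w)) = Complex.exp (L * a) / Complex.exp (L * w) := by
    rw [eq_div_iff (Complex.exp_ne_zero _), ← Complex.exp_add]; ring_nf
  rw [hE]
  field_simp [Complex.exp_ne_zero]
  ring

lemma vanish {n : ℕ} (β : Fin (n + 2) → ℂ) {c : ℝ} (hc : 0 < c)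
    (hβ : ∀ i, ‖β i‖ < c) :
    (∮ w in C(0, c), (∏ i, (w - β i))⁻¹) = 0 := by
  set g : ℂ → ℂ := fun w => (∏ i, (w - β i))⁻¹ with hg
  have hne : ∀ w : ℂ, c ≤ ‖w‖ → (∏ i, (w - β i)) ≠ 0 := by
    intro w hw
    refine Finset.prod_ne_zero_iff.2 fun i _ => sub_ne_zero.2 fun h => ?_
    rw [h] at hw
    exact absurd (hβ i) (not_lt.2 (by simpa using hw))
  have hcont : ∀ w : ℂ, c ≤ ‖w‖ → ContinuousAt g w := by
    intro w hw
    exact (ContinuousAt.inv₀ (by fun_prop) (hne w hw))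
  have key : ∀ R : ℝ, c ≤ R → (∮ w in C(0, R), g w) = ∮ w in C(0, c), g w := by
    intro R hR
    refine circleIntegral_eq_of_differentiable_on_annulus_off_countable hc hR
      Set.countable_empty (fun w hw => (hcont w ?_).continuousWithinAt) (fun w hw => ?_)
    · have h2 := hw.2
      simp only [Metric.mem_ball, dist_zero_right, not_lt] at h2
      exact h2
    · refine DifferentiableAt.inv (by fun_prop) (hne w ?_)
      have h2 := hw.1.2
      simp only [Metric.mem_closedBall, dist_zero_right, not_le] at h2
      exact h2.le
  have bound : ∀ R : ℝ, c < R →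
      ‖∮ w in C(0, c), g w‖ ≤ 2 * π * R * ((R - c) ^ (n + 2))⁻¹ := by
    intro R hR
    rw [← key R hR.le]
    refine circleIntegral.norm_integral_le_of_norm_le_const (by linarith) fun w hw => ?_
    rw [mem_sphere_zero_iff_norm] at hw
    have h1 : (R - c) ^ (n + 2) ≤ ∏ i, ‖w - β i‖ := by
      have h0 : (R - c) ^ (n + 2) = ∏ _i : Fin (n + 2), (R - c) := by
        simp [Finset.prod_const]
      rw [h0]
      refine Finset.prod_le_prod (fun i _ => by linarith) fun i _ => ?_
      calc R - c ≤ ‖w‖ - ‖β i‖ := by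
            rw [hw]
            have := hβ i
            linarith
        _ ≤ ‖w - β i‖ := norm_sub_norm_le w (β i)
        _ = ‖w - β i‖ := rfl
    have hpos : (0:ℝ) < (R - c) ^ (n + 2) := pow_pos (by linarith) _
    rw [hg]
    simp only [norm_inv, norm_prod]
    exact inv_anti₀ hpos h1
  have htend : Filter.Tendsto (fun m : ℕ => 2 * π * (c + 1) * ((m:ℝ) + 1)⁻¹)
      Filter.atTop (nhds 0) := by
    have h := tendsto_one_div_add_atTop_nhds_zero_nat.const_mul (2 * π * (c + 1))
    simpa [div_eq_mul_inv, mul_assoc] using h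
  have hle : ∀ m : ℕ, ‖∮ w in C(0, c), g w‖ ≤ 2 * π * (c + 1) * ((m:ℝ) + 1)⁻¹ := by
    intro m
    have hm0 : (0:ℝ) ≤ (m:ℝ) := Nat.cast_nonneg m
    have hR : c < c + ((m:ℝ) + 1) := by linarith
    refine le_trans (bound _ hR) ?_
    have h2 : (c + ((m:ℝ) + 1) - c) = ((m:ℝ) + 1) := by ring
    rw [h2]
    have hm1 : (1:ℝ) ≤ (m:ℝ) + 1 := by linarith
    have hp : ((m:ℝ) + 1) ^ 2 ≤ ((m:ℝ) + 1) ^ (n + 2) :=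
      pow_le_pow_right₀ hm1 (by omega)
    calc 2 * π * (c + ((m:ℝ) + 1)) * (((m:ℝ) + 1) ^ (n + 2))⁻¹
        ≤ 2 * π * (c + ((m:ℝ) + 1)) * ((((m:ℝ) + 1) ^ 2)⁻¹) := by
          refine mul_le_mul_of_nonneg_left (inv_anti₀ (by positivity) hp) ?_
          have := Real.pi_pos; positivity
      _ ≤ 2 * π * (c + 1) * ((m:ℝ) + 1)⁻¹ := by
          rw [← div_eq_mul_inv, ← div_eq_mul_inv, div_le_div_iff₀ (by positivity) (by positivity)]
          have hpi := Real.pi_pos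
          nlinarith [mul_nonneg (mul_nonneg hpi.le hm0) hc.le, sq_nonneg ((m:ℝ))]
  have hfin : ‖∮ w in C(0, c), g w‖ ≤ 0 := ge_of_tendsto htend (Filter.Eventually.of_forall hle)
  simpa using norm_le_zero_iff.1 hfin

def Sx (n : ℕ) (L : ℝ) : Set (Fin n → ℝ) := {x | (∀ j, 0 ≤ x j) ∧ ∑ j, x j ≤ L}

lemma Sx_meas (n : ℕ) (L : ℝ) : MeasurableSet (Sx n L) := by
  have : Sx n L = (⋂ j, {x : Fin n → ℝ | 0 ≤ x j}) ∩ {x | ∑ j, x j ≤ L} := by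
    ext x; simp [Sx, Set.mem_iInter]
  rw [this]
  exact MeasurableSet.inter
    (MeasurableSet.iInter fun j => measurableSet_le measurable_const (measurable_pi_apply j))
    (measurableSet_le (Finset.measurable_sum _ fun j _ => measurable_pi_apply j) measurable_const)

lemma Sx_compact (n : ℕ) (L : ℝ) : IsCompact (Sx n L) := by
  refine IsCompact.of_isClosed_subset
    (isCompact_univ_pi fun _ : Fin n => (isCompact_Icc : IsCompact (Set.Icc (0:ℝ) L))) ?_ ?_
  · have : Sx n L = (⋂ j, {x : Fin n → ℝ | 0 ≤ x j}) ∩ {x | ∑ j, x j ≤ L} := by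
      ext x; simp [Sx, Set.mem_iInter]
    rw [this]
    exact IsClosed.inter
      (isClosed_iInter fun j => isClosed_le continuous_const (continuous_apply j))
      (isClosed_le (by fun_prop) continuous_const)
  · rintro x ⟨hx0, hxs⟩
    intro j _
    refine ⟨hx0 j, ?_⟩
    calc x j ≤ ∑ i, x i := Finset.single_le_sum (fun i _ => hx0 i) (Finset.mem_univ j)
      _ ≤ L := hxs

lemma Sx_mono (n : ℕ) {L L' : ℝ} (h : L ≤ L') : Sx n L ⊆ Sx n L' :=
  fun _ hx => ⟨hx.1, hx.2.trans h⟩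

lemma RHS_step (n : ℕ) (α : Fin (n + 1) → ℂ) (L : ℝ) :
    (∫ x in Sx (n + 1) L, Complex.exp (∑ j, (x j : ℂ) * α j))
      = ∫ t in Set.Icc (0:ℝ) L,
          Complex.exp (t * α 0) * ∫ y in Sx n (L - t), Complex.exp (∑ j, (y j : ℂ) * α j.succ) := by
  set e := MeasurableEquiv.piFinSuccAbove (fun _ : Fin (n + 1) => ℝ) 0 with he
  have hmp : MeasurePreserving e.symm ((volume : Measure ℝ).prod volume) volume :=
    (volume_preserving_piFinSuccAbove (fun _ => ℝ) 0).symm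
  have hesymm : ∀ p : ℝ × (Fin n → ℝ), e.symm p = Fin.cons p.1 p.2 := by
    intro p
    have : e.symm p = Fin.insertNth 0 p.1 p.2 := rfl
    rw [this, Fin.insertNth_zero']
  have hsum : ∀ (t : ℝ) (y : Fin n → ℝ),
      (∑ j, ((Fin.cons t y : Fin (n+1) → ℝ) j : ℂ) * α j)
        = ↑t * α 0 + ∑ j : Fin n, (y j : ℂ) * α j.succ := by
    intro t y
    rw [Fin.sum_univ_succ]
    simp [Fin.cons_succ]
  have hmem : ∀ (t : ℝ) (y : Fin n → ℝ),
      (Fin.cons t y : Fin (n+1) → ℝ) ∈ Sx (n + 1) L ↔ (t ∈ Set.Icc 0 L ∧ y ∈ Sx n (L - t)) := by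
    intro t y
    have hs : ∑ j, (Fin.cons t y : Fin (n+1) → ℝ) j = t + ∑ j, y j := by
      rw [Fin.sum_univ_succ]; simp [Fin.cons_succ]
    have hall : (∀ j, 0 ≤ (Fin.cons t y : Fin (n+1) → ℝ) j) ↔ (0 ≤ t ∧ ∀ j, 0 ≤ y j) := by
      rw [Fin.forall_fin_succ]; simp [Fin.cons_succ]
    constructor
    · rintro ⟨h1, h2⟩
      rw [hall] at h1
      rw [hs] at h2
      have hys : 0 ≤ ∑ j, y j := Finset.sum_nonneg fun j _ => h1.2 j
      exact ⟨⟨h1.1, by linarith⟩, ⟨h1.2, by linarith⟩⟩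
    · rintro ⟨⟨ht0, htL⟩, ⟨hy0, hyL⟩⟩
      refine ⟨hall.2 ⟨ht0, hy0⟩, ?_⟩
      rw [hs]
      linarith
  -- transfer to product space
  have h0 := hmp.setIntegral_preimage_emb e.symm.measurableEmbedding
    (fun x => Complex.exp (∑ j, (x j : ℂ) * α j)) (Sx (n + 1) L)
  rw [← h0]
  set T : Set (ℝ × (Fin n → ℝ)) := e.symm ⁻¹' Sx (n + 1) L with hT
  have hTmeas : MeasurableSet T := e.symm.measurable (Sx_meas _ _)
  have hTmem : ∀ p : ℝ × (Fin n → ℝ), p ∈ T ↔ (p.1 ∈ Set.Icc 0 L ∧ p.2 ∈ Sx n (L - p.1)) := by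
    intro p
    rw [hT, Set.mem_preimage, hesymm p, hmem]
  set G : ℝ × (Fin n → ℝ) → ℂ :=
    fun p => Complex.exp (↑p.1 * α 0) * Complex.exp (∑ j : Fin n, (p.2 j : ℂ) * α j.succ) with hG
  have hintegrand : ∀ p : ℝ × (Fin n → ℝ),
      Complex.exp (∑ j, ((e.symm p) j : ℂ) * α j) = G p := by
    intro p
    rw [hesymm p, hsum, Complex.exp_add]
  have hGcont : Continuous G := by fun_prop
  -- integrability
  have hTsub : T ⊆ Set.Icc (0:ℝ) L ×ˢ Sx n L := by
    rintro p hp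
    rw [hTmem] at hp
    exact ⟨hp.1, Sx_mono n (by linarith [hp.1.1]) hp.2⟩
  have hint : IntegrableOn G T ((volume : Measure ℝ).prod volume) := by
    refine IntegrableOn.mono_set ?_ hTsub
    exact hGcont.continuousOn.integrableOn_compact (isCompact_Icc.prod (Sx_compact n L))
  calc (∫ p in T, Complex.exp (∑ j, ((e.symm p) j : ℂ) * α j) ∂((volume : Measure ℝ).prod volume))
      = ∫ p in T, G p ∂((volume : Measure ℝ).prod volume) := by
        exact setIntegral_congr_fun hTmeas fun p _ => hintegrand p
    _ = ∫ p, T.indicator G p ∂((volume : Measure ℝ).prod volume) := (integral_indicator hTmeas).symm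
    _ = ∫ t, ∫ y, T.indicator G (t, y) := by
        exact integral_prod _ ((integrable_indicator_iff hTmeas).2 hint)
    _ = ∫ t, (Set.Icc (0:ℝ) L).indicator
          (fun t => Complex.exp (↑t * α 0) * ∫ y in Sx n (L - t),
            Complex.exp (∑ j : Fin n, (y j : ℂ) * α j.succ)) t := by
        refine integral_congr_ae (Filter.Eventually.of_forall fun t => ?_)
        by_cases ht : t ∈ Set.Icc (0:ℝ) L
        · rw [Set.indicator_of_mem ht]
          show (∫ y, T.indicator G (t, y)) = _
          have hslice : (fun y => T.indicator G (t, y))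
              = (Sx n (L - t)).indicator (fun y => G (t, y)) := by
            funext y
            by_cases hy : y ∈ Sx n (L - t)
            · rw [Set.indicator_of_mem hy, Set.indicator_of_mem ((hTmem (t, y)).2 ⟨ht, hy⟩)]
            · rw [Set.indicator_of_notMem hy,
                Set.indicator_of_notMem (fun hmem' => hy ((hTmem (t, y)).1 hmem').2)]
          rw [hslice, integral_indicator (Sx_meas _ _)]
          simp only [hG]
          rw [integral_const_mul]
        · rw [Set.indicator_of_notMem ht]
          show (∫ y, T.indicator G (t, y)) = 0
          have hz : ∀ y, T.indicator G (t, y) = 0 := by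
            intro y
            exact Set.indicator_of_notMem (fun hmem' => ht ((hTmem (t, y)).1 hmem').1) _
          simp [hz]
    _ = ∫ t in Set.Icc (0:ℝ) L,
          Complex.exp (↑t * α 0) * ∫ y in Sx n (L - t),
            Complex.exp (∑ j : Fin n, (y j : ℂ) * α j.succ) := integral_indicator measurableSet_Icc

lemma LHS_step (n : ℕ) (α : Fin (n + 1) → ℂ) {c : ℝ} (hc : 0 < c)
    (hα : ∀ j, ‖α j‖ < c) (L : ℝ) (hL : 0 ≤ L) :
    (∮ w in C(0, c), Complex.exp (w * L) / (w * ∏ j, (w - α j)))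
      = ∫ t in Set.Ioc (0:ℝ) L,
          Complex.exp (t * α 0) *
            ∮ w in C(0, c), Complex.exp (w * ((L - t : ℝ) : ℂ)) /
              (w * ∏ j : Fin n, (w - α j.succ)) := by
  set a := α 0 with ha
  set P : ℂ → ℂ := fun w => w * ∏ j : Fin n, (w - α j.succ) with hPdef
  have hPcont : Continuous P := by fun_prop
  have hsphere : ∀ w ∈ sphere (0:ℂ) c, ‖w‖ = c := by
    intro w hw; rwa [mem_sphere_zero_iff_norm] at hw
  have hPne : ∀ w ∈ sphere (0:ℂ) c, P w ≠ 0 := by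
    intro w hw
    have habs := hsphere w hw
    refine mul_ne_zero (fun h => by simp [h] at habs; exact hc.ne' habs.symm) ?_
    refine Finset.prod_ne_zero_iff.2 fun j _ => sub_ne_zero.2 fun h => ?_
    rw [h] at habs
    exact absurd (hα j.succ) (by rw [habs]; exact lt_irrefl c)
  have hane : ∀ w ∈ sphere (0:ℂ) c, w - a ≠ 0 := by
    intro w hw
    refine sub_ne_zero.2 fun h => ?_
    have habs := hsphere w hw
    rw [h] at habs
    exact absurd (hα 0) (by rw [← ha, habs]; exact lt_irrefl c)
  have hsplit : ∀ w : ℂ, w * ∏ j : Fin (n+1), (w - α j) = (w - a) * P w := by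
    intro w
    rw [hPdef, Fin.prod_univ_succ, ha]
    ring
  set γ : Fin (n+2) → ℂ := Fin.cons 0 α with hγdef
  have hγ : ∀ w : ℂ, (∏ i, (w - γ i)) = w * ∏ j : Fin (n+1), (w - α j) := by
    intro w
    rw [Fin.prod_univ_succ]
    simp [hγdef, Fin.cons_zero, Fin.cons_succ]
  have hγlt : ∀ i, ‖γ i‖ < c := by
    intro i
    refine Fin.cases ?_ (fun j => ?_) i
    · simpa [hγdef] using hc
    · simpa [hγdef, Fin.cons_succ] using hα j
  set f1 : ℂ → ℂ :=
    fun w => (Complex.exp (w * L) - Complex.exp ((L:ℂ) * a)) / ((w - a) * P w) with hf1def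
  set f2 : ℂ → ℂ := fun w => Complex.exp ((L:ℂ) * a) * (∏ i, (w - γ i))⁻¹ with hf2def
  have hf1int : CircleIntegrable f1 0 c := by
    refine ContinuousOn.circleIntegrable hc.le ?_
    exact ContinuousOn.div (by fun_prop) (by fun_prop)
      (fun w hw => mul_ne_zero (hane w hw) (hPne w hw))
  have hf2int : CircleIntegrable f2 0 c := by
    refine ContinuousOn.circleIntegrable hc.le ?_
    refine ContinuousOn.mul continuousOn_const (ContinuousOn.inv₀ (by fun_prop) ?_)
    intro w hw
    rw [hγ w, hsplit w]
    exact mul_ne_zero (hane w hw) (hPne w hw)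
  have hf12int : CircleIntegrable (fun w => f1 w + f2 w) 0 c := hf1int.add hf2int
  -- Step 1: split off the vanishing part
  have e1 : (∮ w in C(0, c), Complex.exp (w * L) / (w * ∏ j, (w - α j)))
      = ∮ w in C(0, c), (f1 w + f2 w) := by
    refine circleIntegral.integral_congr hc.le fun w _ => ?_
    rw [hf1def, hf2def]
    simp only
    rw [hγ w, hsplit w, div_eq_mul_inv, div_eq_mul_inv]
    ring
  have e3 : (∮ w in C(0, c), f2 w) = 0 := by
    rw [hf2def]
    simp only
    rw [circleIntegral.integral_const_mul, vanish γ hc hγlt, mul_zero]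
  have e2 : (∮ w in C(0, c), (f1 w + f2 w)) = ∮ w in C(0, c), f1 w := by
    have hsub := circleIntegral.integral_sub hf12int hf2int
    have : (fun w => f1 w + f2 w - f2 w) = f1 := by funext w; ring
    rw [this] at hsub
    rw [hsub, e3, sub_zero]
  -- Step 2: rewrite f1 as a convolution integral on the sphere
  have e4 : (∮ w in C(0, c), f1 w)
      = ∮ w in C(0, c),
          ∫ t in (0:ℝ)..L, Complex.exp (t * a) * (Complex.exp ((L - t : ℝ) * w) * (P w)⁻¹) := by
    refine circleIntegral.integral_congr hc.le fun w hw => ?_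
    have hwa : w ≠ a := sub_ne_zero.1 (hane w hw)
    have hker := kernel a w hwa L
    simp_rw [← mul_assoc]
    rw [intervalIntegral.integral_mul_const, hker, hf1def]
    simp only
    rw [show w * (L:ℂ) = (L:ℂ) * w from mul_comm _ _, div_eq_mul_inv, div_eq_mul_inv, mul_inv]
    ring
  -- Step 3: swap the circle integral and the t-integral
  set F : ℝ → ℝ → ℂ := fun θ t =>
    deriv (circleMap 0 c) θ •
      (Complex.exp (t * a) *
        (Complex.exp ((L - t : ℝ) * circleMap 0 c θ) * (P (circleMap 0 c θ))⁻¹)) with hFdef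
  have hPcne : ∀ θ : ℝ, P (circleMap 0 c θ) ≠ 0 :=
    fun θ => hPne _ (circleMap_mem_sphere (0:ℂ) hc.le θ)
  have hFcont : Continuous (Function.uncurry F) := by
    have hd : deriv (circleMap 0 c) = fun θ => circleMap 0 c θ * I :=
      funext fun θ => deriv_circleMap _ _ _
    rw [hFdef]
    have hcm : Continuous fun p : ℝ × ℝ => circleMap 0 c p.1 :=
      (continuous_circleMap 0 c).comp continuous_fst
    simp only [Function.uncurry, hd, smul_eq_mul]
    refine (hcm.mul continuous_const).mul (Continuous.mul ?_ (Continuous.mul ?_ ?_))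
    · exact ((Complex.continuous_ofReal.comp continuous_snd).mul continuous_const).cexp
    · exact ((Complex.continuous_ofReal.comp
        (continuous_const.sub continuous_snd)).mul hcm).cexp
    · exact Continuous.inv₀ (hPcont.comp hcm) fun p => hPcne p.1
  have hFint : Integrable (Function.uncurry F)
      ((volume.restrict (Set.Ioc (0:ℝ) (2*π))).prod (volume.restrict (Set.Ioc (0:ℝ) L))) := by
    rw [Measure.prod_restrict]
    refine IntegrableOn.mono_set ?_
      (Set.prod_mono Set.Ioc_subset_Icc_self Set.Ioc_subset_Icc_self)
    exact hFcont.continuousOn.integrableOn_compact (isCompact_Icc.prod isCompact_Icc)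
  have e5 : (∮ w in C(0, c),
        ∫ t in (0:ℝ)..L, Complex.exp (t * a) * (Complex.exp ((L - t : ℝ) * w) * (P w)⁻¹))
      = ∫ t in Set.Ioc (0:ℝ) L, ∫ θ in Set.Ioc (0:ℝ) (2*π), F θ t := by
    simp only [circleIntegral]
    simp_rw [← intervalIntegral.integral_smul]
    rw [intervalIntegral.integral_of_le Real.two_pi_pos.le]
    simp_rw [intervalIntegral.integral_of_le hL]
    exact integral_integral_swap hFint
  have e6 : ∀ t : ℝ, (∫ θ in Set.Ioc (0:ℝ) (2*π), F θ t)
      = Complex.exp (t * a) *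
          ∮ w in C(0, c), Complex.exp (w * ((L - t : ℝ) : ℂ)) /
            (w * ∏ j : Fin n, (w - α j.succ)) := by
    intro t
    have h1 : ∀ θ : ℝ, F θ t = Complex.exp (t * a) *
        (deriv (circleMap 0 c) θ •
          (Complex.exp (((L - t : ℝ) : ℂ) * circleMap 0 c θ) * (P (circleMap 0 c θ))⁻¹)) := by
      intro θ
      rw [hFdef]
      simp only [smul_eq_mul]
      ring
    simp_rw [h1]
    rw [MeasureTheory.integral_const_mul]
    congr 1
    rw [← intervalIntegral.integral_of_le Real.two_pi_pos.le]
    have h2 : (fun w => Complex.exp (w * ((L - t : ℝ) : ℂ)) /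
        (w * ∏ j : Fin n, (w - α j.succ))) =
        fun w => Complex.exp (((L - t : ℝ) : ℂ) * w) * (P w)⁻¹ := by
      funext w
      rw [hPdef]
      simp only
      rw [div_eq_mul_inv, mul_comm w (((L - t : ℝ) : ℂ))]
    rw [h2, circleIntegral]
  rw [e1, e2, e4, e5]
  simp_rw [e6]

lemma main : ∀ (n : ℕ) (α : Fin n → ℂ) (c : ℝ), 0 < c → (∀ j, ‖α j‖ < c) →
    ∀ L : ℝ, 0 ≤ L →
    (1 / (2 * ↑Real.pi * Complex.I)) *
        (∮ w in C(0, c), Complex.exp (w * L) / (w * ∏ j, (w - α j)))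
      = ∫ x in Sx n L, Complex.exp (∑ j, (x j : ℂ) * α j) := by
  intro n
  induction n with
  | zero =>
    intro α c hc hα L hL
    have h1 : (∮ w in C(0, c), Complex.exp (w * L) / (w * ∏ j, (w - α j)))
        = ∮ w in C(0, c), (w - 0)⁻¹ • Complex.exp (w * L) := by
      refine circleIntegral.integral_congr hc.le fun w _ => ?_
      simp [div_eq_mul_inv, mul_comm, smul_eq_mul]
    have h2 : (∮ w in C(0, c), (w - 0)⁻¹ • Complex.exp (w * L))
        = (2 * ↑Real.pi * Complex.I) • Complex.exp ((0 : ℂ) * L) := by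
      refine DiffContOnCl.circleIntegral_sub_inv_smul ?_ (by simpa using hc)
      exact ((differentiable_id.mul_const _).cexp).diffContOnCl
    have hset : Sx 0 L = Set.univ := by
      ext x; simp [Sx, hL]
    rw [h1, h2, hset]
    have hvol : (volume : Measure (Fin 0 → ℝ)) Set.univ = 1 := by
      simp [MeasureTheory.volume_pi, Measure.pi_univ]
    simp [smul_eq_mul, hvol]
    have hpi : (Real.pi : ℂ) ≠ 0 := by exact_mod_cast Real.pi_ne_zero
    field_simp
    simp [Measure.real, hvol]
  | succ n ih =>
    intro α c hc hα L hL
    rw [LHS_step n α hc hα L hL, RHS_step n α L, integral_Icc_eq_integral_Ioc,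
      ← MeasureTheory.integral_const_mul]
    refine setIntegral_congr_fun measurableSet_Ioc fun t ht => ?_
    have h := ih (fun j => α j.succ) c hc (fun j => hα j.succ) (L - t) (by linarith [ht.2])
    rw [← h]
    ring

theorem stmt_8 (k : ℕ) (hk : 1 ≤ k) (α : Fin (2 * k) → ℂ) (c : ℝ)
    (hα : ∀ j, ‖α j‖ < c) (L : ℝ) (hL : 0 < L) :
    (1 / (2 * Real.pi * Complex.I)) *
        (∮ w in C(0, c), Complex.exp (w * L) / (w * ∏ j, (w - α j)))
      = ∫ x : Fin (2 * k) → ℝ in {x | (∀ j, 0 ≤ x j) ∧ ∑ j, x j ≤ L},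
          Complex.exp (∑ j, x j * α j) := by
  have hc : 0 < c := lt_of_le_of_lt (norm_nonneg (α ⟨0, by omega⟩)) (hα ⟨0, by omega⟩)
  exact main (2 * k) α c hc hα L hL.le
end

section
/- For any integer k ≥ 1 and nonnegative integers m_1,...,m_k, the determinant det_{k×k}( 1/(2k+1+m_i−i−j)! ), with the convention 1/n! = 0 for n < 0, equals ∏_{i=1}^k 1/(2k−i+m_i)! times ∏_{1≤i<j≤k} (m_j − m_i − j + i). -/
open Finset

theorem stmt_12 (k : ℕ) (hk : 1 ≤ k) (m : Fin k → ℕ) :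
    Matrix.det (Matrix.of fun i j : Fin k =>
        (1 : ℚ) / Nat.factorial (2 * k - 1 + m i - (i : ℕ) - (j : ℕ)))
      = (∏ i : Fin k, (1 : ℚ) / Nat.factorial (2 * k - 1 - (i : ℕ) + m i)) *
        ∏ i : Fin k, ∏ j ∈ Finset.univ.filter (fun j : Fin k => i < j),
          ((m j : ℚ) - (m i : ℚ) - (j : ℚ) + (i : ℚ)) := by
  set N : Fin k → ℕ := fun i => 2 * k - 1 + m i - (i : ℕ) with hN
  have hmat : (Matrix.of fun i j : Fin k =>
        (1 : ℚ) / Nat.factorial (2 * k - 1 + m i - (i : ℕ) - (j : ℕ)))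
      = Matrix.of (fun i j : Fin k =>
          ((1 : ℚ) / Nat.factorial (N i)) *
            (Matrix.of fun (i j : Fin k) =>
              (descPochhammer ℚ (j : ℕ)).eval ((N i : ℕ) : ℚ)) i j) := by
    ext i j
    have hi := i.isLt
    have hj := j.isLt
    have hjN : (j : ℕ) ≤ N i := by simp only [hN]; omega
    simp only [Matrix.of_apply, descPochhammer_eval_eq_descFactorial]
    have key : ((N i).factorial : ℚ)
        = ((N i - j).factorial : ℚ) * ((N i).descFactorial j) := by
      exact_mod_cast (Nat.factorial_mul_descFactorial hjN).symm
    have h1 : 2 * k - 1 + m i - (i : ℕ) - (j : ℕ) = N i - j := by simp only [hN]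
    rw [h1, key]
    have hd : ((N i).descFactorial j : ℚ) ≠ 0 := by
      have : (N i).descFactorial j ≠ 0 := by
        rw [Ne, Nat.descFactorial_eq_zero_iff_lt]; omega
      exact_mod_cast this
    have hf : (((N i - j).factorial : ℚ)) ≠ 0 := by
      exact_mod_cast (Nat.factorial_pos _).ne'
    field_simp
  rw [hmat, Matrix.det_mul_column,
    ← Matrix.det_eval_matrixOfPolynomials_eq_det_vandermonde
      (fun i => ((N i : ℕ) : ℚ)) (fun j => descPochhammer ℚ (j : ℕ))
      (fun j => descPochhammer_natDegree (R := ℚ) (j : ℕ))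
      (fun j => monic_descPochhammer ℚ (j : ℕ)),
    Matrix.det_vandermonde]
  congr 1
  · refine Finset.prod_congr rfl fun i _ => ?_
    have : N i = 2 * k - 1 - (i : ℕ) + m i := by
      have := i.isLt; simp only [hN]; omega
    rw [this]
  · refine Finset.prod_congr rfl fun i _ => ?_
    rw [show Finset.Ioi i = Finset.univ.filter (fun j : Fin k => i < j) by
      ext j; simp]
    refine Finset.prod_congr rfl fun j hj => ?_
    simp only [Finset.mem_filter] at hj
    have hij : (i : ℕ) < (j : ℕ) := hj.2
    have hi := i.isLt
    have hjk := j.isLt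
    have h1 : N j = 2 * k - 1 - (j : ℕ) + m j := by simp only [hN]; omega
    have h2 : N i = 2 * k - 1 - (i : ℕ) + m i := by simp only [hN]; omega
    rw [h1, h2]
    push_cast [Nat.cast_sub (by omega : (j:ℕ) ≤ 2*k-1),
      Nat.cast_sub (by omega : (i:ℕ) ≤ 2*k-1)]
    ring
end

section
/- Let M be the k×k matrix whose (i,j) entry is the falling-factorial product ∏_{l=1}^{j-1} (2k − i + m_i − l + 1) (with entry 1 when j = 1), where m_1,...,m_k are indeterminates. Then det M = ∏_{1≤i<j≤k} (m_j − m_i + i − j). -/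
open Finset MvPolynomial

theorem stmt_13 (k : ℕ) (hk : 1 ≤ k) :
    Matrix.det (Matrix.of fun i j : Fin k =>
        ∏ l ∈ Finset.range (j : ℕ),
          (X i + C ((2 * k : ℚ) - 1 - (i : ℕ) - l) : MvPolynomial (Fin k) ℚ))
      = ∏ i : Fin k, ∏ j ∈ Finset.univ.filter (fun j : Fin k => i < j),
          (X j - X i + C (((i : ℕ) : ℚ) - ((j : ℕ) : ℚ)) : MvPolynomial (Fin k) ℚ) := by
  set v : Fin k → MvPolynomial (Fin k) ℚ :=
    fun i => X i + C ((2 * k : ℚ) - 1 - (i : ℕ)) with hv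
  set p : Fin k → Polynomial (MvPolynomial (Fin k) ℚ) :=
    fun j => ∏ l ∈ Finset.range (j : ℕ),
      (Polynomial.X - Polynomial.C (C (l : ℚ))) with hp
  have h_monic : ∀ j, (p j).Monic := fun j =>
    Polynomial.monic_prod_of_monic _ _ fun l _ => Polynomial.monic_X_sub_C _
  have h_deg : ∀ j, (p j).natDegree = j := by
    intro j
    rw [hp]
    rw [Polynomial.natDegree_prod_of_monic _ _ fun l _ => Polynomial.monic_X_sub_C _]
    exact (Finset.sum_congr rfl fun l _ => Polynomial.natDegree_X_sub_C _).trans (by simp)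
  have h : (Matrix.of fun i j : Fin k =>
        ∏ l ∈ Finset.range (j : ℕ),
          (X i + C ((2 * k : ℚ) - 1 - (i : ℕ) - l) : MvPolynomial (Fin k) ℚ))
      = Matrix.of fun i j => (p j).eval (v i) := by
    refine Matrix.ext fun i j => ?_
    simp only [Matrix.of_apply, hp, hv, Polynomial.eval_prod, Polynomial.eval_sub,
      Polynomial.eval_X, Polynomial.eval_C]
    refine Finset.prod_congr rfl fun l _ => ?_
    rw [C_sub]
    ring
  rw [h, ← Matrix.det_eval_matrixOfPolynomials_eq_det_vandermonde v p h_deg h_monic,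
    Matrix.det_vandermonde]
  refine Finset.prod_congr rfl fun i _ => ?_
  have hIoi : Finset.univ.filter (fun j : Fin k => i < j) = Finset.Ioi i := by
    ext j; simp
  rw [hIoi]
  refine Finset.prod_congr rfl fun j _ => ?_
  simp only [hv, map_sub, map_mul, map_one, map_natCast]
  ring
end
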